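/- Let A be an Archimedean, infinitesimal-free, proper *-ring, and write a ≺ b for a = ab. For all a, b, c ∈ A: (1) a*a ≺ b implies a ≺ b; (2) if b = b* and b ≥ 0 then a ≺ bⁿ implies a ≺ b, for every integer n ≥ 1; (3) if ‖a‖ ≤ 1 then a ≺ b implies a*a ≤ b*b; (4) if ‖b‖ ≤ 1 then aba* = aa* implies a ≺ b; (5) if ‖b‖ ≤ 1 then a ≺ b* implies a ≺ b; (6) if ‖b‖ ≤ 1 and ‖c‖ ≤ 1 then a ≺ bc implies a ≺ bb*; (7) if ⌈c⌉ ≤ 1 and ‖c‖ ≤ 1 then a ≺ b together with b ≤ c implies a ≺ c. -/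

import Mathlib

open scoped ENNReal

/-- `B_Σ`: the set of finite sums `p₁ + ⋯ + p_k` (`k ≥ 1`) with each `pᵢ = bᵢbᵢ*`
for some `bᵢ ∈ B`. -/
def starSums {A : Type*} [NonUnitalRing A] [StarRing A] (B : Set A) : Set A :=
  {x | ∃ (n : ℕ) (f : Fin (n + 1) → A), (∀ i, f i ∈ B) ∧ x = ∑ i, f i * star (f i)}

/-- `⌈a⌉ = sup_b inf {m/n : m(bb*) − n(bab*) ∈ A_Σ}` computed in `[0,∞]`. -/
noncomputable def ceil' {A : Type*} [NonUnitalRing A] [StarRing A] (a : A) : ℝ≥0∞ :=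
  ⨆ b : A, sInf {q : ℝ≥0∞ | ∃ m n : ℕ, 0 < m ∧ 0 < n ∧ q = (m : ℝ≥0∞) / (n : ℝ≥0∞) ∧
    m • (b * star b) - n • (b * a * star b) ∈ starSums (Set.univ : Set A)}

/-- `‖a‖ = √(max(⌈aa*⌉, ⌈a*a⌉))` computed in `[0,∞]`. -/
noncomputable def rnorm' {A : Type*} [NonUnitalRing A] [StarRing A] (a : A) : ℝ≥0∞ :=
  (max (ceil' (a * star a)) (ceil' (star a * a))) ^ (1 / 2 : ℝ)

/-- The order `a ≤ b ⇔ ⌈a − b⌉ = 0`. -/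
def cle {A : Type*} [NonUnitalRing A] [StarRing A] (a b : A) : Prop :=
  ceil' (a - b) = 0

/-- `pw b n = b^(n+1)` (powers in a possibly non-unital ring). -/
def pw {A : Type*} [NonUnitalRing A] (b : A) : ℕ → A
  | 0 => b
  | n + 1 => pw b n * b

/-! Two rules govern `⌈·⌉`: conjugation is submultiplicative, `⌈s x s*⌉ ≤ ⌈x⌉ ⌈s s*⌉`, and
`⌈y⌉ ≤ 1` forces `w y w* ≤ w w*`. Both come from composing the certificates
`m (u u*) - n (u x u*) ∈ A_Σ` that define `⌈·⌉`. In an Archimedean ring `⌈s s*⌉` is finite, so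
conjugation preserves positivity. To show `a ≺ b` one writes `d d*`, for `d = a - a b`, as a sum of
terms that are `≤ 0` by these rules; then `d d* = 0` because `A` has no infinitesimals, and `d = 0`
because `A` is proper. For `a ≺ bⁿ` the sum `d d* + ∑_{0<j<n} d bʲ d*` telescopes to `0`, and each
`d bʲ d*` is positive since `bʲ` is a conjugate of `b` or of a square. -/

theorem ENNReal.natCast_mul_lt_of_div_lt_div {m n p q : ℕ} (hn : 0 < n) (hq : 0 < q)
    (h : (m : ℝ≥0∞) / n < (p : ℝ≥0∞) / q) : m * q < n * p := by
  rw [ENNReal.div_lt_iff (Or.inl (by exact_mod_cast hn.ne')) (by simp),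
    ← ENNReal.mul_div_right_comm,
    ENNReal.lt_div_iff_mul_lt (Or.inl (by exact_mod_cast hq.ne')) (by simp)] at h
  rw [mul_comm n]
  exact_mod_cast h

theorem ENNReal.one_lt_natCast_succ_div {k : ℕ} (hk : 0 < k) :
    (1 : ℝ≥0∞) < ((k + 1 : ℕ) : ℝ≥0∞) / k := by
  rw [ENNReal.lt_div_iff_mul_lt (Or.inl (by exact_mod_cast hk.ne')) (by simp), one_mul]
  exact_mod_cast k.lt_succ_self

/- A certificate `m • X - n • Y ∈ S` says `n Y ≤ m X` in the order with positive cone `S`. -/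
section Cone
variable {G : Type*} [AddCommGroup G] (S : AddSubmonoid G) {X Y Z : G} {m n m₁ n₁ m₂ n₂ p q : ℕ}

theorem nsmul_sub_nsmul_mem_trans (h₂ : m₂ • X - n₂ • Y ∈ S) (h₁ : m₁ • Y - n₁ • Z ∈ S) :
    (m₁ * m₂) • X - (n₁ * n₂) • Z ∈ S := by
  have : (m₁ * m₂) • X - (n₁ * n₂) • Z = m₁ • (m₂ • X - n₂ • Y) + n₂ • (m₁ • Y - n₁ • Z) := by
    module
  rw [this]
  exact add_mem (nsmul_mem h₂ _) (nsmul_mem h₁ _)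

theorem nsmul_sub_nsmul_mem_add (h₁ : m₁ • X - n₁ • Y ∈ S) (h₂ : m₂ • X - n₂ • Z ∈ S) :
    (m₁ * n₂ + m₂ * n₁) • X - (n₁ * n₂) • (Y + Z) ∈ S := by
  have : (m₁ * n₂ + m₂ * n₁) • X - (n₁ * n₂) • (Y + Z)
      = n₂ • (m₁ • X - n₁ • Y) + n₁ • (m₂ • X - n₂ • Z) := by
    module
  rw [this]
  exact add_mem (nsmul_mem h₁ _) (nsmul_mem h₂ _)

theorem nsmul_sub_nsmul_mem_of_mul_le (hX : X ∈ S) (h : m • X - n • Y ∈ S) (hle : m * q ≤ n * p) :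
    (n * p) • X - (n * q) • Y ∈ S := by
  obtain ⟨t, ht⟩ := Nat.exists_eq_add_of_le hle
  have : (n * p) • X - (n * q) • Y = q • (m • X - n • Y) + t • X := by
    rw [ht]; module
  rw [this]
  exact add_mem (nsmul_mem h _) (nsmul_mem hX _)

end Cone

def ratioSet (p : ℕ → ℕ → Prop) : Set ℝ≥0∞ :=
  {q | ∃ m n : ℕ, 0 < m ∧ 0 < n ∧ q = (m : ℝ≥0∞) / (n : ℝ≥0∞) ∧ p m n}

noncomputable def ratioInf (p : ℕ → ℕ → Prop) : ℝ≥0∞ :=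
  sInf (ratioSet p)

section RatioInf
variable {p q r : ℕ → ℕ → Prop}

theorem ratioInf_le {m n : ℕ} (hm : 0 < m) (hn : 0 < n) (h : p m n) :
    ratioInf p ≤ (m : ℝ≥0∞) / n :=
  sInf_le ⟨m, n, hm, hn, rfl, h⟩

theorem exists_of_ratioInf_lt {c : ℝ≥0∞} (h : ratioInf p < c) :
    ∃ m n : ℕ, 0 < m ∧ 0 < n ∧ (m : ℝ≥0∞) / n < c ∧ p m n := by
  obtain ⟨_, ⟨m, n, hm, hn, rfl, hp⟩, hlt⟩ := sInf_lt_iff.mp h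
  exact ⟨m, n, hm, hn, hlt, hp⟩

theorem ratioInf_eq_zero (h : ∀ k : ℕ, 0 < k → ∃ n, 0 < n ∧ p n (n * k)) : ratioInf p = 0 := by
  by_contra hne
  obtain ⟨k, hk⟩ := ENNReal.exists_inv_nat_lt hne
  have hk0 : 0 < k := Nat.pos_of_ne_zero (by rintro rfl; simp at hk)
  obtain ⟨n, hn, hp⟩ := h k hk0
  refine (ratioInf_le hn (Nat.mul_pos hn hk0) hp).not_gt ?_
  rwa [Nat.cast_mul, ← mul_one (n : ℝ≥0∞), mul_assoc, one_mul,
    ENNReal.mul_div_mul_left _ _ (by exact_mod_cast hn.ne') (ENNReal.natCast_ne_top n), one_div]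

theorem ratioInf_add_le
    (h : ∀ m₁ n₁ m₂ n₂, p m₁ n₁ → q m₂ n₂ → r (m₁ * n₂ + m₂ * n₁) (n₁ * n₂)) :
    ratioInf r ≤ ratioInf p + ratioInf q := by
  change ratioInf r ≤ sInf (ratioSet p) + sInf (ratioSet q)
  rw [sInf_eq_iInf', sInf_eq_iInf']
  refine ENNReal.le_iInf_add_iInf
    fun ⟨_, m₁, n₁, hm₁, hn₁, rfl, hp⟩ ⟨_, m₂, n₂, hm₂, hn₂, rfl, hq⟩ => ?_
  refine (ratioInf_le (by positivity) (by positivity) (h _ _ _ _ hp hq)).trans_eq ?_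
  have h₁ : (n₁ : ℝ≥0∞) ≠ 0 := by exact_mod_cast hn₁.ne'
  have h₂ : (n₂ : ℝ≥0∞) ≠ 0 := by exact_mod_cast hn₂.ne'
  push_cast
  rw [ENNReal.add_div, ENNReal.mul_div_mul_right _ _ h₂ (ENNReal.natCast_ne_top _),
    mul_comm (n₁ : ℝ≥0∞), ENNReal.mul_div_mul_right _ _ h₁ (ENNReal.natCast_ne_top _)]

theorem ratioInf_mul_le (hp : ratioInf p ≠ ⊤) (hq : ratioInf q ≠ ⊤)
    (h : ∀ m₁ n₁ m₂ n₂, p m₁ n₁ → q m₂ n₂ → r (m₁ * m₂) (n₁ * n₂)) :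
    ratioInf r ≤ ratioInf p * ratioInf q := by
  rw [ratioInf, sInf_eq_iInf'] at hp hq
  change ratioInf r ≤ sInf (ratioSet p) * sInf (ratioSet q)
  rw [sInf_eq_iInf', sInf_eq_iInf']
  refine ENNReal.le_iInf_mul_iInf ?_ ?_
    fun ⟨_, m₁, n₁, hm₁, hn₁, rfl, hp⟩ ⟨_, m₂, n₂, hm₂, hn₂, rfl, hq⟩ => ?_
  · simpa [iInf_eq_top] using hp
  · simpa [iInf_eq_top] using hq
  refine (ratioInf_le (by positivity) (by positivity) (h _ _ _ _ hp hq)).trans_eq ?_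
  push_cast
  exact ENNReal.mul_div_mul_comm (Or.inr (ENNReal.natCast_ne_top _))
    (Or.inl (ENNReal.natCast_ne_top _))

end RatioInf

section StarSums
variable (A : Type*) [NonUnitalRing A] [StarRing A]

def starSumsAddSubmonoid : AddSubmonoid A where
  carrier := starSums Set.univ
  zero_mem' := ⟨0, fun _ => 0, fun _ => trivial, by simp⟩
  add_mem' := by
    rintro _ _ ⟨k, f, -, rfl⟩ ⟨l, g, -, rfl⟩
    refine ⟨k + l + 1, Fin.append f g ∘ Fin.cast (by omega), fun _ => trivial, ?_⟩
    rw [Function.comp_def, Fin.sum_congr' (fun i => Fin.append f g i * star (Fin.append f g i)),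
      Fin.sum_univ_add (a := k + 1)]
    simp only [Fin.append_left, Fin.append_right]

variable {A}

theorem mul_star_self_mem (s : A) : s * star s ∈ starSumsAddSubmonoid A :=
  ⟨0, fun _ => s, fun _ => trivial, by simp⟩

theorem star_eq_of_mem_starSums {x : A} (hx : x ∈ starSumsAddSubmonoid A) : star x = x := by
  obtain ⟨n, f, -, rfl⟩ := hx
  simp [star_sum, star_mul]

theorem star_mem_starSums_iff {x : A} :
    star x ∈ starSumsAddSubmonoid A ↔ x ∈ starSumsAddSubmonoid A :=
  ⟨fun h => star_star x ▸ (star_eq_of_mem_starSums h).symm ▸ h,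
    fun h => (star_eq_of_mem_starSums h).symm ▸ h⟩

end StarSums

section Ceil
variable {A : Type*} [NonUnitalRing A] [StarRing A]

noncomputable def ceilAt (u x : A) : ℝ≥0∞ :=
  ratioInf fun m n => m • (u * star u) - n • (u * x * star u) ∈ starSumsAddSubmonoid A

theorem ceil'_eq_iSup_ceilAt (x : A) : ceil' x = ⨆ u, ceilAt u x := rfl

theorem ceilAt_le_ceil' (u x : A) : ceilAt u x ≤ ceil' x := le_iSup (fun u => ceilAt u x) u

theorem ceil'_neg_mul_star_self (s : A) : ceil' (-(s * star s)) = 0 := by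
  refine ENNReal.iSup_eq_zero.mpr fun u => ratioInf_eq_zero fun k _ => ⟨1, one_pos, ?_⟩
  have : 1 • (u * star u) - (1 * k) • (u * -(s * star s) * star u)
      = u * star u + k • ((u * s) * star (u * s)) := by
    simp [star_mul, mul_assoc]
  rw [this]
  exact add_mem (mul_star_self_mem u) (nsmul_mem (mul_star_self_mem _) k)

theorem ceil'_zero : ceil' (0 : A) = 0 := by simpa using ceil'_neg_mul_star_self (0 : A)

theorem ceil'_star (x : A) : ceil' (star x) = ceil' x := by
  rw [ceil'_eq_iSup_ceilAt, ceil'_eq_iSup_ceilAt]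
  refine iSup_congr fun u => congrArg ratioInf (funext₂ fun m n => propext ?_)
  rw [← star_mem_starSums_iff]
  simp [star_sub, star_mul, mul_assoc]

theorem ceil'_add_le (x y : A) : ceil' (x + y) ≤ ceil' x + ceil' y :=
  iSup_le fun u => le_trans (ratioInf_add_le fun _ _ _ _ hx hy => by
      rw [mul_add, add_mul]
      exact nsmul_sub_nsmul_mem_add _ hx hy)
    (add_le_add (ceilAt_le_ceil' u x) (ceilAt_le_ceil' u y))

theorem ceil'_conj_le {x : A} (s : A) (hx : ceil' x ≠ ⊤) (hs : ceil' (s * star s) ≠ ⊤) :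
    ceil' (s * x * star s) ≤ ceil' x * ceil' (s * star s) :=
  iSup_le fun u => le_trans
    (ratioInf_mul_le (ne_top_of_le_ne_top hx (ceilAt_le_ceil' (u * s) x))
      (ne_top_of_le_ne_top hs (ceilAt_le_ceil' u _)) fun _ _ _ _ hx hs => by
        simp only [star_mul, mul_assoc] at hx hs ⊢
        exact nsmul_sub_nsmul_mem_trans _ hs hx)
    (mul_le_mul' (ceilAt_le_ceil' _ x) (ceilAt_le_ceil' u _))

theorem conj_cle_mul_star_self {y : A} (w : A) (hy : ceil' y ≤ 1) (hw : ceil' (w * star w) ≠ ⊤) :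
    cle (w * y * star w) (w * star w) := by
  refine ENNReal.iSup_eq_zero.mpr fun u => ?_
  set P : ℕ → ℕ → Prop := fun s t =>
    s • (u * w * star (u * w)) - t • (u * (w * y * star w - w * star w) * star u)
      ∈ starSumsAddSubmonoid A
  -- a certificate for `y` at `u w` with ratio below `1 + 1/k` yields one for `P` with ratio `1/k`
  have hP : ratioInf P = 0 := ratioInf_eq_zero fun k hk => by
    obtain ⟨m, n, -, hn, hlt, hmn⟩ := exists_of_ratioInf_lt
      ((ceilAt_le_ceil' (u * w) y).trans_lt (hy.trans_lt (ENNReal.one_lt_natCast_succ_div hk)))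
    refine ⟨n, hn, ?_⟩
    have := nsmul_sub_nsmul_mem_of_mul_le _ (mul_star_self_mem _) hmn
      (ENNReal.natCast_mul_lt_of_div_lt_div hn hk hlt).le
    convert this using 1
    simp only [star_mul, mul_assoc, mul_sub, sub_mul]
    module
  refine nonpos_iff_eq_zero.mp ?_
  calc ceilAt u (w * y * star w - w * star w) ≤ ratioInf P * ceilAt u (w * star w) :=
        ratioInf_mul_le (by simp [hP]) (ne_top_of_le_ne_top hw (ceilAt_le_ceil' u _))
          fun _ _ _ _ hP hw => by
            simp only [P, star_mul, mul_assoc] at hP hw ⊢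
            exact nsmul_sub_nsmul_mem_trans _ hw hP
    _ = 0 := by rw [hP, zero_mul]

end Ceil

section Order
variable {A : Type*} [NonUnitalRing A] [StarRing A]

theorem rnorm'_le_one_iff {a : A} :
    rnorm' a ≤ 1 ↔ ceil' (a * star a) ≤ 1 ∧ ceil' (star a * a) ≤ 1 := by
  rw [rnorm', ← max_le_iff]
  conv_rhs => rw [← ENNReal.rpow_le_rpow_iff (z := 1 / 2) (by norm_num), ENNReal.one_rpow]

theorem ceil'_add_eq_zero {x y : A} (hx : ceil' x = 0) (hy : ceil' y = 0) : ceil' (x + y) = 0 :=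
  nonpos_iff_eq_zero.mp ((ceil'_add_le x y).trans_eq (by rw [hx, hy, add_zero]))

theorem ceil'_sum_eq_zero {ι : Type*} (s : Finset ι) {f : ι → A} (h : ∀ i ∈ s, ceil' (f i) = 0) :
    ceil' (∑ i ∈ s, f i) = 0 :=
  Finset.sum_induction f (fun x => ceil' x = 0) (fun _ _ => ceil'_add_eq_zero) ceil'_zero h

theorem ceil'_neg_conj_eq_zero {x : A} (s : A) (hs : ceil' (s * star s) ≠ ⊤) (hx : ceil' (-x) = 0) :
    ceil' (-(s * x * star s)) = 0 := by
  have := ceil'_conj_le s (hx ▸ ENNReal.zero_ne_top) hs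
  rw [hx, zero_mul, mul_neg, neg_mul] at this
  exact nonpos_iff_eq_zero.mp this

theorem cle_antisymm (hInf : ∀ a : A, ceil' a = 0 → ceil' (-a) = 0 → a = 0) {x y : A}
    (hxy : cle x y) (hyx : cle y x) : x = y :=
  sub_eq_zero.mp (hInf _ hxy (by rwa [neg_sub]))

theorem cle_conj (hfin : ∀ s : A, ceil' (s * star s) ≠ ⊤) {x y : A} (h : cle x y) (s : A) :
    cle (s * x * star s) (s * y * star s) := by
  have := ceil'_neg_conj_eq_zero s (hfin s) (x := y - x)
    (by rwa [neg_sub])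
  rwa [mul_sub, sub_mul, neg_sub] at this

theorem eq_zero_of_ceil'_mul_star_self_eq_zero
    (hInf : ∀ a : A, ceil' a = 0 → ceil' (-a) = 0 → a = 0)
    (hProper : ∀ a : A, a * star a = 0 → a = 0) {d : A} (h : ceil' (d * star d) = 0) : d = 0 :=
  hProper d (hInf _ h (ceil'_neg_mul_star_self d))

end Order

theorem pw_succ' {A : Type*} [NonUnitalRing A] (b : A) : ∀ j, pw b (j + 1) = b * pw b j
  | 0 => rfl
  | j + 1 => by
      show pw b (j + 1) * b = b * (pw b j * b)
      rw [pw_succ' b j, mul_assoc]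

section Absorption
variable {A : Type*} [NonUnitalRing A] [StarRing A]

theorem eq_mul_of_star_mul_self_eq (hProper : ∀ a : A, a * star a = 0 → a = 0) {a b : A}
    (h : star a * a = star a * a * b) : a = a * b := by
  have h' : star a * (a * b) = star a * a := by rw [← mul_assoc, ← h]
  have hzero : star (a - a * b) * star (star (a - a * b)) = 0 := by
    calc star (a - a * b) * star (star (a - a * b))
        = (star a * a - star a * (a * b)) - star b * (star a * a - star a * (a * b)) := by
          simp only [star_star, star_sub, star_mul, mul_sub, sub_mul, mul_assoc]
          abel
      _ = 0 := by rw [h', sub_self, mul_zero, sub_zero]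
  exact sub_eq_zero.mp (star_eq_zero.mp (hProper _ hzero))

theorem star_pw {b : A} (hb : star b = b) : ∀ j, star (pw b j) = pw b j
  | 0 => hb
  | j + 1 => by
      show star (pw b j * b) = pw b (j + 1)
      rw [star_mul, hb, star_pw hb j, pw_succ']

theorem ceil'_neg_pw_eq_zero (hfin : ∀ s : A, ceil' (s * star s) ≠ ⊤) {b : A}
    (hb : star b = b) (hb0 : ceil' (-b) = 0) : ∀ j, ceil' (-pw b j) = 0
  | 0 => hb0
  | 1 => by
      show ceil' (-(b * b)) = 0
      nth_rw 2 [← hb]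
      exact ceil'_neg_mul_star_self b
  | j + 2 => by
      have : pw b (j + 2) = b * pw b j * star b := by
        show pw b (j + 1) * b = _
        rw [pw_succ', hb]
      rw [this]
      exact ceil'_neg_conj_eq_zero b (hfin b)
        (ceil'_neg_pw_eq_zero hfin hb hb0 j)

theorem mul_star_add_sum_eq_zero {a b : A} (hb : star b = b) {n : ℕ} (h : a = a * pw b n) :
    (a - a * b) * star (a - a * b)
      + ∑ j ∈ Finset.range n, (a - a * b) * pw b j * star (a - a * b) = 0 := by
  set e := a - a * b
  have hstar : star e = star a - b * star a := by simp [e, star_sub, star_mul, hb]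
  have hterm : ∀ j, e * pw b j * star e = e * pw b j * star a - e * pw b (j + 1) * star a := by
    intro j
    rw [hstar, mul_sub, show pw b (j + 1) = pw b j * b from rfl]
    simp only [mul_assoc]
  have hend : pw b n * star a = star a := by
    conv_rhs => rw [h]
    rw [star_mul, star_pw hb]
  rw [Finset.sum_congr rfl fun j _ => hterm j, Finset.sum_range_sub', hstar, mul_assoc e (pw b n),
    hend]
  simp only [pw, mul_sub, mul_assoc]
  abel

theorem eq_mul_of_eq_mul_pw (hfin : ∀ s : A, ceil' (s * star s) ≠ ⊤)
    (hInf : ∀ a : A, ceil' a = 0 → ceil' (-a) = 0 → a = 0)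
    (hProper : ∀ a : A, a * star a = 0 → a = 0) {a b : A} (hb : star b = b)
    (hb0 : ceil' (-b) = 0) {n : ℕ} (h : a = a * pw b n) : a = a * b := by
  refine sub_eq_zero.mp (eq_zero_of_ceil'_mul_star_self_eq_zero hInf hProper ?_)
  rw [eq_neg_of_add_eq_zero_left (mul_star_add_sum_eq_zero hb h), ← Finset.sum_neg_distrib]
  exact ceil'_sum_eq_zero _ fun j _ => ceil'_neg_conj_eq_zero _
    (hfin _) (ceil'_neg_pw_eq_zero hfin hb hb0 j)

theorem cle_star_mul_self_of_eq_mul (hfin : ∀ s : A, ceil' (s * star s) ≠ ⊤) {a b : A}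
    (ha : ceil' (star a * a) ≤ 1) (h : a = a * b) : cle (star a * a) (star b * b) := by
  have := conj_cle_mul_star_self (star b) ha (hfin _)
  have hconj : star b * (star a * a) * star (star b) = star a * a := by
    conv_rhs => rw [h]
    simp only [star_star, star_mul, mul_assoc]
  rwa [hconj, star_star] at this

theorem eq_mul_of_mul_mul_star_eq (hfin : ∀ s : A, ceil' (s * star s) ≠ ⊤)
    (hInf : ∀ a : A, ceil' a = 0 → ceil' (-a) = 0 → a = 0)
    (hProper : ∀ a : A, a * star a = 0 → a = 0) {a b : A} (hb : ceil' (b * star b) ≤ 1)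
    (h : a * b * star a = a * star a) : a = a * b := by
  refine sub_eq_zero.mp (eq_zero_of_ceil'_mul_star_self_eq_zero hInf hProper ?_)
  have h' : a * star b * star a = a * star a := by
    simpa only [star_mul, star_star, mul_assoc] using congrArg star h
  have hexp : (a - a * b) * star (a - a * b) = a * (b * star b) * star a - a * star a := by
    calc (a - a * b) * star (a - a * b)
        = a * star a - a * b * star a - a * star b * star a + a * (b * star b) * star a := by
          simp only [mul_sub, sub_mul, star_sub, star_mul, mul_assoc]
          abel
      _ = _ := by
          rw [h, h']
          abel
  rw [hexp]
  exact conj_cle_mul_star_self a hb (hfin a)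

theorem eq_mul_of_eq_mul_star (hfin : ∀ s : A, ceil' (s * star s) ≠ ⊤)
    (hInf : ∀ a : A, ceil' a = 0 → ceil' (-a) = 0 → a = 0)
    (hProper : ∀ a : A, a * star a = 0 → a = 0) {a b : A} (hb : ceil' (b * star b) ≤ 1)
    (h : a = a * star b) : a = a * b := by
  have hstar : star a = b * star a := by
    conv_lhs => rw [h]
    rw [star_mul, star_star]
  exact eq_mul_of_mul_mul_star_eq hfin hInf hProper hb (by rw [mul_assoc, ← hstar])

theorem eq_mul_mul_star_of_eq_mul_mul (hfin : ∀ s : A, ceil' (s * star s) ≠ ⊤)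
    (hInf : ∀ a : A, ceil' a = 0 → ceil' (-a) = 0 → a = 0)
    (hProper : ∀ a : A, a * star a = 0 → a = 0) {a b c : A} (hb : rnorm' b ≤ 1)
    (hc : ceil' (c * star c) ≤ 1) (h : a = a * (b * c)) : a = a * (b * star b) := by
  obtain ⟨hb₁, hb₂⟩ := rnorm'_le_one_iff.mp hb
  have hbb : ceil' (b * star b * star (b * star b)) ≤ 1 :=
    calc ceil' (b * star b * star (b * star b)) = ceil' (b * (star b * b) * star b) := by
          simp only [star_mul, star_star, mul_assoc]
      _ ≤ ceil' (star b * b) * ceil' (b * star b) :=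
          ceil'_conj_le b (ne_top_of_le_ne_top ENNReal.one_ne_top hb₂)
            (ne_top_of_le_ne_top ENNReal.one_ne_top hb₁)
      _ ≤ 1 := mul_le_one' hb₂ hb₁
  refine eq_mul_of_mul_mul_star_eq hfin hInf hProper hbb
    (cle_antisymm hInf (conj_cle_mul_star_self a hb₁ (hfin a)) ?_)
  have := conj_cle_mul_star_self (a * b) hc (hfin _)
  have hconj : a * b * (c * star c) * star (a * b) = a * star a := by
    conv_rhs => rw [h]
    simp only [star_mul, mul_assoc]
  rwa [hconj, star_mul, ← mul_assoc, mul_assoc a] at this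

theorem eq_mul_of_eq_mul_of_cle (hfin : ∀ s : A, ceil' (s * star s) ≠ ⊤)
    (hInf : ∀ a : A, ceil' a = 0 → ceil' (-a) = 0 → a = 0)
    (hProper : ∀ a : A, a * star a = 0 → a = 0) {a b c : A} (hc : ceil' (c * star c) ≤ 1)
    (h : a = a * b) (hbc : cle b c) : a = a * c := by
  refine sub_eq_zero.mp (eq_zero_of_ceil'_mul_star_self_eq_zero hInf hProper ?_)
  have h₁ : cle (a * (c * star c) * star a) (a * star a) := conj_cle_mul_star_self a hc (hfin a)
  have h₂ : cle (a * star a) (a * c * star a) := by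
    simpa only [← h] using cle_conj hfin hbc a
  have h₃ : cle (a * star a) (a * star c * star a) := by
    rw [cle, ← ceil'_star]
    simpa only [cle, star_sub, star_mul, star_star, mul_assoc] using h₂
  have hexp : (a - a * c) * star (a - a * c) = (a * (c * star c) * star a - a * star a)
      + (a * star a - a * c * star a) + (a * star a - a * star c * star a) := by
    simp only [mul_sub, sub_mul, star_sub, star_mul, mul_assoc]
    abel
  rw [hexp]
  exact ceil'_add_eq_zero (ceil'_add_eq_zero h₁ h₂) h₃

end Absorption

theorem stmt13 {A : Type*} [NonUnitalRing A] [StarRing A]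
    (hArch : ∀ a : A, ceil' (-a) = 0 → ceil' a ≠ ⊤)
    (hInf : ∀ a : A, ceil' a = 0 → ceil' (-a) = 0 → a = 0)
    (hProper : ∀ a : A, a * star a = 0 → a = 0) :
    (∀ a b : A, star a * a = star a * a * b → a = a * b) ∧
    (∀ a b : A, star b = b → ceil' (-b) = 0 → ∀ n : ℕ, a = a * pw b n → a = a * b) ∧
    (∀ a b : A, rnorm' a ≤ 1 → a = a * b → cle (star a * a) (star b * b)) ∧
    (∀ a b : A, rnorm' b ≤ 1 → a * b * star a = a * star a → a = a * b) ∧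
    (∀ a b : A, rnorm' b ≤ 1 → a = a * star b → a = a * b) ∧
    (∀ a b c : A, rnorm' b ≤ 1 → rnorm' c ≤ 1 → a = a * (b * c) → a = a * (b * star b)) ∧
    (∀ a b c : A, ceil' c ≤ 1 → rnorm' c ≤ 1 → a = a * b → cle b c → a = a * c) := by
  have hfin : ∀ s : A, ceil' (s * star s) ≠ ⊤ := fun s => hArch _ (ceil'_neg_mul_star_self s)
  exact ⟨fun _ _ => eq_mul_of_star_mul_self_eq hProper,
    fun _ _ hb hb0 _ => eq_mul_of_eq_mul_pw hfin hInf hProper hb hb0,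
    fun _ _ ha => cle_star_mul_self_of_eq_mul hfin (rnorm'_le_one_iff.mp ha).2,
    fun _ _ hb => eq_mul_of_mul_mul_star_eq hfin hInf hProper (rnorm'_le_one_iff.mp hb).1,
    fun _ _ hb => eq_mul_of_eq_mul_star hfin hInf hProper (rnorm'_le_one_iff.mp hb).1,
    fun _ _ _ hb hc => eq_mul_mul_star_of_eq_mul_mul hfin hInf hProper hb
      (rnorm'_le_one_iff.mp hc).1,
    fun _ _ _ _ hc => eq_mul_of_eq_mul_of_cle hfin hInf hProper (rnorm'_le_one_iff.mp hc).1⟩
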